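/- arXiv:1103.2796 — 8 statements merged into one kernel-verified Lean document; each statement's English description precedes it below -/
import Mathlib

section
/- Let η be a Radon measure on ℝ such that for every Borel set A with η(A) > 0 one has ∫_{0}^{∞} η(A + t) dt > 0 (equivalently, (η ⊗ L¹)({(x,t) : t ≥ 0, x − t ∈ A}) > 0). Then η is absolutely continuous with respect to Lebesgue measure L¹. -/
open MeasureTheory

/- Computing the η ⊗ μ-measure of `{(t, x) | x - t ∈ A}` by slicing in either order gives
`∫ η(A + t) dμ(t) = μ(A) · η(G)` (Tonelli applies since a locally finite measure on ℝ is
σ-finite). For a Lebesgue-null `A` this vanishes, so `η(A) = 0` by hypothesis. -/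

theorem lintegral_measure_preimage_sub_const {G : Type*} [MeasurableSpace G] [AddGroup G]
    [MeasurableAdd₂ G] [MeasurableNeg G] (η μ : Measure G) [SFinite η] [SFinite μ]
    [μ.IsAddLeftInvariant] [μ.IsNegInvariant] {A : Set G} (hA : MeasurableSet A) :
    ∫⁻ t, η {x | x - t ∈ A} ∂μ = μ A * η Set.univ := by
  have hS : MeasurableSet {p : G × G | p.2 - p.1 ∈ A} :=
    (measurable_snd.sub measurable_fst) hA
  calc ∫⁻ t, η {x | x - t ∈ A} ∂μ
      = μ.prod η {p : G × G | p.2 - p.1 ∈ A} := (Measure.prod_apply hS).symm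
    _ = ∫⁻ x, μ ((fun t => x - t) ⁻¹' A) ∂η := Measure.prod_apply_symm hS
    _ = ∫⁻ _, μ A ∂η := by
        simp only [(Measure.measurePreserving_sub_left μ _).measure_preimage hA.nullMeasurableSet]
    _ = μ A * η Set.univ := lintegral_const _

/-- If η is a Radon (locally finite Borel) measure on ℝ such that every Borel set `A`
with `η A > 0` satisfies `∫_{0}^{∞} η (A + t) dt > 0`, then `η` is absolutely continuous
with respect to Lebesgue measure. Here `A + t = {x | x - t ∈ A}` is the translate. -/
theorem stmt1 (η : Measure ℝ) [IsLocallyFiniteMeasure η]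
    (h : ∀ A : Set ℝ, MeasurableSet A → 0 < η A →
      0 < ∫⁻ t in Set.Ioi (0 : ℝ), η {x | x - t ∈ A}) :
    η ≪ (volume : Measure ℝ) := by
  refine Measure.AbsolutelyContinuous.mk fun A hA hA0 => ?_
  by_contra hηA
  have hpos := h A hA (pos_iff_ne_zero.mpr hηA)
  have hfull : ∫⁻ t, η {x | x - t ∈ A} = 0 := by
    rw [lintegral_measure_preimage_sub_const η volume hA, hA0, zero_mul]
  exact hpos.ne' (le_antisymm (hfull ▸ setLIntegral_le_lintegral _ _) zero_le)
end

section
/- Let μ, ν be Borel probability measures on ℝ with μ continuous (atomless), and let H(s) = μ((−∞, s)), F(t) = ν((−∞, t)) be their left-continuous distribution functions. Then the nondecreasing map T(s) = sup{t ∈ ℝ : F(t) ≤ H(s)} pushes μ forward to ν: T_♯ μ = ν. -/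
/-!
Write `H s = μ (-∞, s)`. Since `μ` has no atoms, `H` pushes `μ` forward to the uniform
distribution on `[0, 1]`: `μ {H ≤ c} ≤ c ≤ μ {H < c}`, and in particular `0 < H < 1` holds
`μ`-almost everywhere. Moreover `T = q ∘ H` for the upper quantile `q a = sup {t | ν (-∞, t) ≤ a}`
of `ν`, and for `0 < a < 1` we have `a < ν (-∞, x] → q a ≤ x → a ≤ ν (-∞, x]`. Hence, up to
`μ`-null sets, `T⁻¹ (-∞, x]` lies between `{H < c}` and `{H ≤ c}` with `c = ν (-∞, x]`, and so has
`μ`-measure `c`.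
-/

open MeasureTheory Set Filter Topology
open scoped ENNReal

section LinearOrder

variable {α : Type*} [LinearOrder α] [TopologicalSpace α] [OrderClosedTopology α]
  [SecondCountableTopology α] [MeasurableSpace α] (μ : Measure α)

theorem measure_biUnion_Iio_eq_iSup (A : Set α) :
    μ (⋃ s ∈ A, Iio s) = ⨆ s ∈ A, μ (Iio s) := by
  -- Lindelöf: countably many of the open sets `Iio s` already cover the union.
  obtain ⟨B, hBA, hB, hBA_union⟩ :=
    TopologicalSpace.isOpen_biUnion_countable A Iio fun s _ => isOpen_Iio
  refine le_antisymm ?_ (iSup₂_le fun s hs => measure_mono (subset_biUnion_of_mem hs))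
  have hdir : DirectedOn (Function.onFun (· ⊆ ·) Iio) B := fun s hs t ht =>
    ⟨max s t, max_rec' B hs ht, Iio_subset_Iio (le_max_left s t),
      Iio_subset_Iio (le_max_right s t)⟩
  rw [← hBA_union, measure_biUnion_eq_iSup hB hdir]
  exact iSup₂_le fun s hs => le_iSup₂ (f := fun s _ => μ (Iio s)) s (hBA hs)

theorem measure_le_iSup_measure_Iio [NullSingletonClass μ] (A : Set α) :
    μ A ≤ ⨆ s ∈ A, μ (Iio s) := by
  -- Only a greatest element of `A` can escape the union of the `Iio s`, `s ∈ A`.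
  have hA : A ⊆ (⋃ s ∈ A, Iio s) ∪ {s ∈ A | ∀ t ∈ A, t ≤ s} := fun s hs => by
    by_cases h : ∃ t ∈ A, s < t
    · obtain ⟨t, ht, hst⟩ := h
      exact Or.inl (mem_biUnion ht hst)
    · push Not at h
      exact Or.inr ⟨hs, h⟩
  have hmax : {s ∈ A | ∀ t ∈ A, t ≤ s}.Subsingleton := fun s hs t ht =>
    le_antisymm (ht.2 s hs.1) (hs.2 t ht.1)
  calc μ A ≤ μ (⋃ s ∈ A, Iio s) + μ {s ∈ A | ∀ t ∈ A, t ≤ s} :=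
        (measure_mono hA).trans (measure_union_le _ _)
    _ = ⨆ s ∈ A, μ (Iio s) := by
        rw [hmax.measure_zero, add_zero, measure_biUnion_Iio_eq_iSup]

theorem measure_le_iSup_measure_Ioi [NullSingletonClass μ] (A : Set α) :
    μ A ≤ ⨆ s ∈ A, μ (Ioi s) :=
  have : NullSingletonClass (α := αᵒᵈ) μ := ‹_›
  measure_le_iSup_measure_Iio (α := αᵒᵈ) μ A

theorem measure_setOf_measure_Iio_le [NullSingletonClass μ] (c : ℝ≥0∞) :
    μ {s | μ (Iio s) ≤ c} ≤ c :=
  (measure_le_iSup_measure_Iio μ _).trans (iSup₂_le fun _ hs => hs)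

variable [OpensMeasurableSpace α] [NullSingletonClass μ]

theorem measure_setOf_le_measure_Iio [IsFiniteMeasure μ] (c : ℝ≥0∞) :
    μ {s | c ≤ μ (Iio s)} ≤ μ univ - c := by
  refine (measure_le_iSup_measure_Ioi μ _).trans (iSup₂_le fun s hs => ?_)
  rw [← compl_Iic, measure_compl measurableSet_Iic (measure_ne_top _ _),
    ← measure_congr Iio_ae_eq_Iic]
  exact tsub_le_tsub_left hs _

theorem le_measure_setOf_measure_Iio_lt [IsFiniteMeasure μ] {c : ℝ≥0∞} (hc : c ≤ μ univ) :
    c ≤ μ {s | μ (Iio s) < c} := by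
  have hcover : μ univ ≤ μ {s | μ (Iio s) < c} + (μ univ - c) := by
    calc μ univ ≤ μ {s | μ (Iio s) < c} + μ {s | c ≤ μ (Iio s)} :=
          (measure_mono fun s _ => lt_or_ge (μ (Iio s)) c).trans (measure_union_le _ _)
      _ ≤ μ {s | μ (Iio s) < c} + (μ univ - c) := by
          gcongr
          exact measure_setOf_le_measure_Iio μ c
  rwa [← tsub_le_iff_right, ENNReal.sub_sub_cancel (measure_ne_top _ _) hc] at hcover

theorem ae_measure_Iio_mem_Ioo [IsProbabilityMeasure μ] :
    ∀ᵐ s ∂μ, μ (Iio s) ∈ Ioo 0 1 := by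
  have h₀ : μ {s | μ (Iio s) ≤ 0} = 0 := nonpos_iff_eq_zero.1 (measure_setOf_measure_Iio_le μ 0)
  have h₁ : μ {s | 1 ≤ μ (Iio s)} = 0 := by simpa using measure_setOf_le_measure_Iio μ 1
  filter_upwards [measure_eq_zero_iff_ae_notMem.1 h₀, measure_eq_zero_iff_ae_notMem.1 h₁]
    with s hs₀ hs₁
  exact ⟨not_le.1 hs₀, not_le.1 hs₁⟩

end LinearOrder

noncomputable def upperQuantile (ν : Measure ℝ) (a : ℝ≥0∞) : ℝ :=
  sSup {t | ν (Iio t) ≤ a}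

section UpperQuantile

variable {ν : Measure ℝ} {a : ℝ≥0∞} {x : ℝ}

theorem nonempty_setOf_measure_Iio_le [IsFiniteMeasure ν] (ha : 0 < a) :
    {t | ν (Iio t) ≤ a}.Nonempty := by
  have hlim : Tendsto (fun t => ν (Iio t)) atBot (𝓝 0) := by
    have hempty : (⋂ t : ℝ, Iio t) = ∅ :=
      iInter_Iio_of_not_bddBelow_range (f := id) (by simp [not_bddBelow_univ])
    simpa [hempty, Function.comp_def] using
      tendsto_measure_iInter_atBot (μ := ν) (s := Iio)
        (fun _ => nullMeasurableSet_Iio) monotone_Iio ⟨0, measure_ne_top _ _⟩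
  exact (hlim.eventually (ge_mem_nhds ha)).exists

theorem bddAbove_setOf_measure_Iio_le (ha : a < ν univ) : BddAbove {t | ν (Iio t) ≤ a} := by
  have hlim : Tendsto (fun t => ν (Iio t)) atTop (𝓝 (ν univ)) := by
    simpa [Function.comp_def] using tendsto_measure_iUnion_atTop (μ := ν) monotone_Iio
  obtain ⟨t₀, ht₀⟩ := (hlim.eventually (lt_mem_nhds ha)).exists_forall_of_atTop
  exact ⟨t₀, fun t ht => le_of_not_gt fun h => (ht₀ t h.le).not_ge ht⟩

variable [IsProbabilityMeasure ν]

theorem upperQuantile_le_iff (ha : a ∈ Ioo 0 1) :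
    upperQuantile ν a ≤ x ↔ ∀ t, x < t → a < ν (Iio t) := by
  rw [upperQuantile, csSup_le_iff (bddAbove_setOf_measure_Iio_le (by simpa using ha.2))
    (nonempty_setOf_measure_Iio_le ha.1)]
  simp only [mem_ofPred_eq, ← not_lt]
  exact forall_congr' fun t => not_imp_not

theorem upperQuantile_le_of_lt_measure_Iic (ha : a ∈ Ioo 0 1) (h : a < ν (Iic x)) :
    upperQuantile ν a ≤ x :=
  (upperQuantile_le_iff ha).2 fun _ ht => h.trans_le (measure_mono (Iic_subset_Iio.2 ht))

theorem le_measure_Iic_of_upperQuantile_le (ha : a ∈ Ioo 0 1) (h : upperQuantile ν a ≤ x) :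
    a ≤ ν (Iic x) := by
  have hlim : Tendsto (fun t => ν (Iio t)) (𝓝[>] x) (𝓝 (ν (Iic x))) := by
    have hIic : (⋂ t > x, Iio t) = Iic x := by
      ext s
      simp only [mem_iInter, mem_Iio, mem_Iic]
      exact forall_gt_iff_le
    simpa [hIic, Function.comp_def] using
      tendsto_measure_biInter_gt (μ := ν) (s := Iio) (a := x) (fun _ _ => nullMeasurableSet_Iio)
        (fun _ _ _ hij => Iio_subset_Iio hij) ⟨x + 1, by linarith, measure_ne_top _ _⟩
  exact ge_of_tendsto hlim (eventually_nhdsWithin_of_forall fun t ht =>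
    ((upperQuantile_le_iff ha).1 h t ht).le)

theorem monotoneOn_upperQuantile : MonotoneOn (upperQuantile ν) (Ioo 0 1) :=
  fun _ ha _ hb hab => csSup_le_csSup (bddAbove_setOf_measure_Iio_le (by simpa using hb.2))
    (nonempty_setOf_measure_Iio_le ha.1) fun _ ht => le_trans ht hab

theorem aemeasurable_upperQuantile_measure_Iio (μ : Measure ℝ) [IsProbabilityMeasure μ]
    [NullSingletonClass μ] : AEMeasurable (fun s => upperQuantile ν (μ (Iio s))) μ := by
  have hH : Monotone fun s => μ (Iio s) := fun _ _ h => measure_mono (Iio_subset_Iio h)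
  have hrestrict := aemeasurable_restrict_of_monotoneOn (μ := μ) (hH.measurable measurableSet_Ioo)
    fun _ hs _ ht hst => monotoneOn_upperQuantile (ν := ν) hs ht (hH hst)
  rwa [Measure.restrict_eq_self_of_ae_mem (s := (fun s => μ (Iio s)) ⁻¹' Ioo 0 1)
    (ae_measure_Iio_mem_Ioo μ)] at hrestrict

end UpperQuantile

/-- Monotone rearrangement on ℝ: if `μ`, `ν` are Borel probability measures on ℝ with `μ`
atomless, the nondecreasing map `T(s) = sup {t : ν((-∞,t)) ≤ μ((-∞,s))}` pushes `μ`
forward to `ν`. -/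
theorem stmt7 (μ ν : Measure ℝ) [IsProbabilityMeasure μ] [IsProbabilityMeasure ν]
    [NullSingletonClass μ]
    (T : ℝ → ℝ)
    (hT : ∀ s, T s = sSup {t : ℝ | ν (Set.Iio t) ≤ μ (Set.Iio s)}) :
    Measure.map T μ = ν := by
  obtain rfl : T = fun s => upperQuantile ν (μ (Iio s)) := funext hT
  have hTm := aemeasurable_upperQuantile_measure_Iio (ν := ν) μ
  have hH := ae_measure_Iio_mem_Ioo μ
  have := Measure.isProbabilityMeasure_map hTm
  refine Measure.ext_of_Iic _ _ fun x => ?_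
  rw [Measure.map_apply_of_aemeasurable hTm measurableSet_Iic]
  apply le_antisymm
  · calc μ (_ ⁻¹' Iic x) ≤ μ {s | μ (Iio s) ≤ ν (Iic x)} :=
          measure_mono_ae (hH.mono fun _ hs hsx => le_measure_Iic_of_upperQuantile_le hs hsx)
      _ ≤ ν (Iic x) := measure_setOf_measure_Iio_le μ _
  · calc ν (Iic x) ≤ μ {s | μ (Iio s) < ν (Iic x)} :=
          le_measure_setOf_measure_Iio_lt μ (by simpa using prob_le_one)
      _ ≤ μ (_ ⁻¹' Iic x) :=
          measure_mono_ae (hH.mono fun _ hs hsx => upperQuantile_le_of_lt_measure_Iic hs hsx)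
end

section
/- Let Y be a Polish space, ξ_n a sequence of Borel probability measures on Y converging weakly to ξ, and r_n ∈ L¹(ξ_n) nonnegative functions with r_n ξ_n converging weakly to a measure ζ. Assume the uniform integrability condition: for every ε > 0 there is δ > 0 such that for all n and all Borel A, ξ_n(A) < δ implies ∫_A r_n dξ_n < ε. Then ζ is absolutely continuous with respect to ξ, i.e. ζ = r ξ for some r ∈ L¹(ξ). -/
/-!
Let `A` be `ξ`-null and `ε > 0`, and let `δ` be given by uniform integrability. By outer regularity
`A` lies in an open `U` with `ξ U < δ`, and by inner regularity it suffices to bound `ζ K` for closed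
`K ⊆ U`. Squeeze a closed neighbourhood `closure V ⊆ U` of `K` and take an Urysohn function `φ`
equal to `1` on `K` and `0` off `V`. The portmanteau theorem gives `ξₙ (closure V) < δ` for large
`n`, hence `∫ φ rₙ dξₙ ≤ ∫_{closure V} rₙ dξₙ < ε`, and in the limit `ζ K ≤ ∫ φ dζ ≤ ε`.
-/

open MeasureTheory Filter Set
open scoped ENNReal BoundedContinuousFunction

theorem integral_mul_le_setIntegral {Y : Type*} [MeasurableSpace Y] {μ : Measure Y}
    {φ r : Y → ℝ} {s : Set Y} (hs : MeasurableSet s) (hφm : AEStronglyMeasurable φ μ)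
    (hφ : ∀ y, φ y ∈ Icc 0 1) (hφs : EqOn φ 0 sᶜ) (hr : ∀ y, 0 ≤ r y) (hri : Integrable r μ) :
    ∫ y, φ y * r y ∂μ ≤ ∫ y in s, r y ∂μ := by
  have hφr : Integrable (fun y => φ y * r y) μ :=
    hri.bdd_mul hφm (c := 1) (.of_forall fun y => by
      rw [Real.norm_eq_abs, abs_le]; exact ⟨by linarith [(hφ y).1], (hφ y).2⟩)
  have hle : ∀ y, φ y * r y ≤ s.indicator r y := by
    intro y
    by_cases hy : y ∈ s
    · rw [indicator_of_mem hy]; exact mul_le_of_le_one_left (hr y) (hφ y).2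
    · rw [indicator_of_notMem hy, hφs hy, Pi.zero_apply, zero_mul]
  rw [← integral_indicator hs]
  exact integral_mono hφr (hri.indicator hs) hle

theorem eventually_measure_lt_of_tendsto_integral {Ω ι : Type*} {L : Filter ι}
    [MeasurableSpace Ω] [TopologicalSpace Ω] [OpensMeasurableSpace Ω] [HasOuterApproxClosed Ω]
    {μs : ι → Measure Ω} {μ : Measure Ω} [∀ i, IsFiniteMeasure (μs i)] [IsFiniteMeasure μ]
    (h : ∀ f : Ω →ᵇ ℝ, Tendsto (fun i => ∫ x, f x ∂(μs i)) L (nhds (∫ x, f x ∂μ)))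
    {F : Set Ω} (hF : IsClosed F) {c : ℝ≥0∞} (hc : μ F < c) :
    ∀ᶠ i in L, μs i F < c := by
  let νs : ι → FiniteMeasure Ω := fun i => ⟨μs i, inferInstance⟩
  let ν : FiniteMeasure Ω := ⟨μ, inferInstance⟩
  have hlim : Tendsto νs L (nhds ν) := FiniteMeasure.tendsto_iff_forall_integral_tendsto.2 h
  exact eventually_lt_of_limsup_lt
    ((FiniteMeasure.limsup_measure_closed_le_of_tendsto hlim hF).trans_lt hc)

section UniformlyIntegrableDensities

variable {Y : Type*} [TopologicalSpace Y] [MeasurableSpace Y] [OpensMeasurableSpace Y]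
  {ξn : ℕ → Measure Y} {ξ ζ : Measure Y} [∀ n, IsFiniteMeasure (ξn n)] [IsFiniteMeasure ξ]
  {r : ℕ → Y → ℝ} {ε : ℝ} {c : ℝ≥0∞}

theorem integral_le_of_eqOn_compl_isClosed [HasOuterApproxClosed Y]
    (hweak : ∀ f : Y →ᵇ ℝ, Tendsto (fun n => ∫ y, f y ∂(ξn n)) atTop (nhds (∫ y, f y ∂ξ)))
    (hrpos : ∀ n y, 0 ≤ r n y) (hrint : ∀ n, Integrable (r n) (ξn n))
    (hζweak : ∀ f : Y →ᵇ ℝ,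
      Tendsto (fun n => ∫ y, f y * r n y ∂(ξn n)) atTop (nhds (∫ y, f y ∂ζ)))
    (hsmall : ∀ n, ∀ A : Set Y, MeasurableSet A → ξn n A < c → ∫ y in A, r n y ∂(ξn n) < ε)
    {φ : Y →ᵇ ℝ} (hφ : ∀ y, φ y ∈ Icc 0 1) {F : Set Y} (hF : IsClosed F) (hφF : EqOn φ 0 Fᶜ)
    (hξF : ξ F < c) :
    ∫ y, φ y ∂ζ ≤ ε := by
  refine le_of_tendsto (hζweak φ) ?_
  filter_upwards [eventually_measure_lt_of_tendsto_integral hweak hF hξF] with n hn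
  exact (integral_mul_le_setIntegral hF.measurableSet φ.continuous.aestronglyMeasurable hφ hφF
    (hrpos n) (hrint n)).trans (hsmall n F hF.measurableSet hn).le

theorem measure_isClosed_le_of_subset [HasOuterApproxClosed Y] [NormalSpace Y]
    [IsFiniteMeasure ζ]
    (hweak : ∀ f : Y →ᵇ ℝ, Tendsto (fun n => ∫ y, f y ∂(ξn n)) atTop (nhds (∫ y, f y ∂ξ)))
    (hrpos : ∀ n y, 0 ≤ r n y) (hrint : ∀ n, Integrable (r n) (ξn n))
    (hζweak : ∀ f : Y →ᵇ ℝ,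
      Tendsto (fun n => ∫ y, f y * r n y ∂(ξn n)) atTop (nhds (∫ y, f y ∂ζ)))
    (hsmall : ∀ n, ∀ A : Set Y, MeasurableSet A → ξn n A < c → ∫ y in A, r n y ∂(ξn n) < ε)
    {K U : Set Y} (hK : IsClosed K) (hU : IsOpen U) (hKU : K ⊆ U) (hξU : ξ U < c) :
    ζ K ≤ ENNReal.ofReal ε := by
  obtain ⟨V, hV, hKV, hVU⟩ := normal_exists_closure_subset hK hU hKU
  obtain ⟨φ, hφV, hφK, hφ⟩ := exists_bounded_zero_one_of_closed hV.isClosed_compl hK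
    (disjoint_compl_left_iff_subset.2 hKV)
  have hφζ : ∫ y, φ y ∂ζ ≤ ε :=
    integral_le_of_eqOn_compl_isClosed hweak hrpos hrint hζweak hsmall hφ isClosed_closure
      (hφV.mono (compl_subset_compl.2 subset_closure)) ((measure_mono hVU).trans_lt hξU)
  have hKφ : ζ.real K ≤ ∫ y, φ y ∂ζ :=
    calc ζ.real K = ∫ y in K, φ y ∂ζ := by
          rw [setIntegral_congr_fun hK.measurableSet hφK]
          simp only [Pi.one_apply, setIntegral_const, smul_eq_mul, mul_one]
      _ ≤ ∫ y, φ y ∂ζ := setIntegral_le_integral (φ.integrable ζ) (.of_forall fun y => (hφ y).1)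
  rw [← ofReal_measureReal]
  exact ENNReal.ofReal_le_ofReal (hKφ.trans hφζ)

theorem measure_isOpen_le_of_measure_lt [HasOuterApproxClosed Y] [NormalSpace Y]
    [IsFiniteMeasure ζ] [ζ.WeaklyRegular]
    (hweak : ∀ f : Y →ᵇ ℝ, Tendsto (fun n => ∫ y, f y ∂(ξn n)) atTop (nhds (∫ y, f y ∂ξ)))
    (hrpos : ∀ n y, 0 ≤ r n y) (hrint : ∀ n, Integrable (r n) (ξn n))
    (hζweak : ∀ f : Y →ᵇ ℝ,
      Tendsto (fun n => ∫ y, f y * r n y ∂(ξn n)) atTop (nhds (∫ y, f y ∂ζ)))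
    (hsmall : ∀ n, ∀ A : Set Y, MeasurableSet A → ξn n A < c → ∫ y in A, r n y ∂(ξn n) < ε)
    {U : Set Y} (hU : IsOpen U) (hξU : ξ U < c) :
    ζ U ≤ ENNReal.ofReal ε := by
  rw [hU.measure_eq_iSup_isClosed ζ]
  exact iSup₂_le fun K hKU => iSup_le fun hK =>
    measure_isClosed_le_of_subset hweak hrpos hrint hζweak hsmall hK hU hKU hξU

theorem absolutelyContinuous_of_tendsto_integral_mul [HasOuterApproxClosed Y] [NormalSpace Y]
    [ξ.OuterRegular] [IsFiniteMeasure ζ] [ζ.WeaklyRegular]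
    (hweak : ∀ f : Y →ᵇ ℝ, Tendsto (fun n => ∫ y, f y ∂(ξn n)) atTop (nhds (∫ y, f y ∂ξ)))
    (hrpos : ∀ n y, 0 ≤ r n y) (hrint : ∀ n, Integrable (r n) (ξn n))
    (hζweak : ∀ f : Y →ᵇ ℝ,
      Tendsto (fun n => ∫ y, f y * r n y ∂(ξn n)) atTop (nhds (∫ y, f y ∂ζ)))
    (hequi : ∀ ε : ℝ, 0 < ε → ∃ δ : ℝ, 0 < δ ∧ ∀ n, ∀ A : Set Y, MeasurableSet A →
      ξn n A < ENNReal.ofReal δ → ∫ y in A, r n y ∂(ξn n) < ε) :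
    ζ ≪ ξ := by
  refine fun A hA => le_antisymm (ENNReal.le_of_forall_pos_le_add fun ε hε _ => ?_) zero_le
  obtain ⟨δ, hδ, hsmall⟩ := hequi ε hε
  obtain ⟨U, hAU, hU, hξU⟩ :=
    A.exists_isOpen_lt_of_lt (μ := ξ) _ (hA.trans_lt (ENNReal.ofReal_pos.2 hδ))
  calc ζ A ≤ ζ U := measure_mono hAU
    _ ≤ ENNReal.ofReal ε :=
      measure_isOpen_le_of_measure_lt hweak hrpos hrint hζweak hsmall hU hξU
    _ = 0 + ε := by simp

end UniformlyIntegrableDensities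

/-- Stability of absolute continuity: if `ξₙ → ξ` weakly on a Polish space, `rₙ ≥ 0` are
`L¹(ξₙ)` densities with `rₙ ξₙ → ζ` weakly, and the `rₙ` are uniformly integrable
(`ξₙ A < δ ⟹ ∫_A rₙ dξₙ < ε`), then `ζ ≪ ξ`, i.e. `ζ = r ξ` for some `r ∈ L¹(ξ)`. -/
theorem stmt9 {Y : Type*} [TopologicalSpace Y] [PolishSpace Y]
    [MeasurableSpace Y] [BorelSpace Y]
    (ξn : ℕ → Measure Y) (ξ : Measure Y)
    [∀ n, IsProbabilityMeasure (ξn n)] [IsProbabilityMeasure ξ]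
    (hweak : ∀ f : Y →ᵇ ℝ,
      Tendsto (fun n => ∫ y, f y ∂(ξn n)) atTop (nhds (∫ y, f y ∂ξ)))
    (r : ℕ → Y → ℝ) (hrpos : ∀ n y, 0 ≤ r n y)
    (hrint : ∀ n, Integrable (r n) (ξn n))
    (ζ : Measure Y) [IsFiniteMeasure ζ]
    (hζweak : ∀ f : Y →ᵇ ℝ,
      Tendsto (fun n => ∫ y, f y * r n y ∂(ξn n)) atTop (nhds (∫ y, f y ∂ζ)))
    (hequi : ∀ ε : ℝ, 0 < ε → ∃ δ : ℝ, 0 < δ ∧ ∀ n, ∀ A : Set Y, MeasurableSet A →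
      ξn n A < ENNReal.ofReal δ → ∫ y in A, r n y ∂(ξn n) < ε) :
    ζ ≪ ξ ∧ ∃ ρ : Y → ℝ≥0∞, Measurable ρ ∧ ζ = ξ.withDensity ρ := by
  have hac : ζ ≪ ξ :=
    absolutelyContinuous_of_tendsto_integral_mul hweak hrpos hrint hζweak hequi
  exact ⟨hac, ζ.rnDeriv ξ, Measure.measurable_rnDeriv ζ ξ,
    (Measure.withDensity_rnDeriv_eq ζ ξ hac).symm⟩
end

section
/- Let X be a Polish space, μ a finite Borel measure, and μ_k a nondecreasing sequence of finite Borel measures with μ = sup_k μ_k (i.e. μ_k(A) ↑ μ(A) for all Borel A). Suppose each μ_k is of the form μ_k = g_♯(r_k (m_k ⊗ L¹)) for a fixed Borel injective map g : S × ℝ → X, nonnegative r_k ∈ L¹(m_k ⊗ L¹), and finite Borel measures m_k on S with m_k = (P₁)_♯(r_k m_k ⊗ L¹). Then there exist a finite Borel measure m on S and a nonnegative r ∈ L¹(m ⊗ L¹) with μ = g_♯(r (m ⊗ L¹)). -/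
/-!
By Lusin–Souslin, `g` is a measurable embedding, so `μ` can be pulled back to
`λ := g^*μ` on `S × ℝ`; `λ` is the supremum of the pullbacks `rₖ (mₖ ⊗ L¹)` of the `μₖ`, and
`μ = g_♯ λ` because every `μₖ` lives on the range of `g`. The marginal condition gives
`mₖ = (P₁)_♯(rₖ mₖ ⊗ L¹) ≤ (P₁)_♯ λ =: m`, hence every `rₖ (mₖ ⊗ L¹)` and therefore `λ` is
absolutely continuous with respect to `m ⊗ L¹`; take `r := dλ / d(m ⊗ L¹)`.
-/

open MeasureTheory Measure Set
open scoped ENNReal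

namespace MeasureTheory.Measure

variable {α ι : Type*} [MeasurableSpace α] {μ : Measure α} {μs : ι → Measure α}

theorem measure_eq_zero_of_forall_eq_iSup (hsup : ∀ A, MeasurableSet A → μ A = ⨆ i, μs i A)
    {A : Set α} (hA : MeasurableSet A) (h : ∀ i, μs i A = 0) : μ A = 0 := by
  simp [hsup A hA, h]

theorem le_of_forall_eq_iSup (hsup : ∀ A, MeasurableSet A → μ A = ⨆ i, μs i A) (i : ι) :
    μs i ≤ μ :=
  le_iff.2 fun A hA => (hsup A hA).symm ▸ le_iSup (fun i => μs i A) i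

theorem absolutelyContinuous_of_forall_eq_iSup
    (hsup : ∀ A, MeasurableSet A → μ A = ⨆ i, μs i A) {ν : Measure α} (hac : ∀ i, μs i ≪ ν) :
    μ ≪ ν :=
  AbsolutelyContinuous.mk fun _ hA hν => measure_eq_zero_of_forall_eq_iSup hsup hA fun i => hac i hν

end MeasureTheory.Measure

namespace MeasurableEmbedding

variable {α β ι : Type*} [MeasurableSpace α] [MeasurableSpace β] {f : α → β}

theorem comap_mono (hf : MeasurableEmbedding f) {μ ν : Measure β} (h : μ ≤ ν) :
    comap f μ ≤ comap f ν :=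
  le_iff'.2 fun s => by simpa only [hf.comap_apply] using h _

theorem comap_apply_eq_iSup (hf : MeasurableEmbedding f) {μ : Measure β} {μs : ι → Measure β}
    (hsup : ∀ A, MeasurableSet A → μ A = ⨆ i, μs i A) {s : Set α} (hs : MeasurableSet s) :
    comap f μ s = ⨆ i, comap f (μs i) s := by
  simpa only [hf.comap_apply] using hsup _ (hf.measurableSet_image.2 hs)

theorem map_comap_of_measure_compl_range (hf : MeasurableEmbedding f) {μ : Measure β}
    (h : μ (range f)ᶜ = 0) : map f (comap f μ) = μ := by
  rw [hf.map_comap, restrict_eq_self_of_ae_mem (ae_iff.2 h)]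

theorem map_apply_compl_range (hf : MeasurableEmbedding f) (μ : Measure α) :
    map f μ (range f)ᶜ = 0 := by
  simp [hf.map_apply]

end MeasurableEmbedding

theorem stmt10_general {X S : Type*}
    [TopologicalSpace X] [PolishSpace X] [MeasurableSpace X] [BorelSpace X]
    [TopologicalSpace S] [PolishSpace S] [MeasurableSpace S] [BorelSpace S]
    (g : S × ℝ → X) (hg : Measurable g) (hginj : Function.Injective g)
    (μ : Measure X) [IsFiniteMeasure μ]
    (μk : ℕ → Measure X)
    (hsup : ∀ A : Set X, MeasurableSet A → μ A = ⨆ k, μk k A)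
    (mk : ℕ → Measure S)
    (rk : ℕ → S × ℝ → ℝ≥0∞)
    (hrep : ∀ k, μk k = Measure.map g (((mk k).prod volume).withDensity (rk k)))
    (hmarg : ∀ k, mk k = Measure.map Prod.fst (((mk k).prod volume).withDensity (rk k))) :
    ∃ (m : Measure S) (r : S × ℝ → ℝ≥0∞), IsFiniteMeasure m ∧ Measurable r ∧
      μ = Measure.map g ((m.prod volume).withDensity r) := by
  have hge : MeasurableEmbedding g := hg.measurableEmbedding hginj
  set lam := comap g μ
  set m := map Prod.fst lam
  have hμ : μ = map g lam := by
    refine (hge.map_comap_of_measure_compl_range ?_).symm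
    refine measure_eq_zero_of_forall_eq_iSup hsup hge.measurableSet_range.compl fun k => ?_
    rw [hrep k]
    exact hge.map_apply_compl_range _
  have hlk : ∀ k, comap g (μk k) = ((mk k).prod volume).withDensity (rk k) := fun k => by
    rw [hrep k, hge.comap_map]
  have hmk : ∀ k, mk k ≤ m := fun k => by
    rw [hmarg k, ← hlk k]
    exact map_mono (hge.comap_mono (le_of_forall_eq_iSup hsup k)) measurable_fst
  have hac : lam ≪ m.prod volume := by
    refine absolutelyContinuous_of_forall_eq_iSup (fun _ => hge.comap_apply_eq_iSup hsup) fun k => ?_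
    rw [hlk k]
    exact (withDensity_absolutelyContinuous _ _).trans ((hmk k).absolutelyContinuous.prod .rfl)
  refine ⟨m, lam.rnDeriv (m.prod volume), inferInstance, measurable_rnDeriv _ _, ?_⟩
  rw [withDensity_rnDeriv_eq _ _ hac, hμ]

/-- If `μₖ ↑ μ` is a nondecreasing sequence of finite Borel measures on a Polish space,
each of the form `μₖ = g_♯(rₖ (mₖ ⊗ L¹))` for a fixed Borel injective `g : S × ℝ → X`,
with `mₖ = (P₁)_♯(rₖ mₖ ⊗ L¹)`, then `μ = g_♯(r (m ⊗ L¹))` for some finite Borel measure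
`m` on `S` and density `r ∈ L¹(m ⊗ L¹)`. -/
theorem stmt10 {X S : Type*}
    [TopologicalSpace X] [PolishSpace X] [MeasurableSpace X] [BorelSpace X]
    [TopologicalSpace S] [PolishSpace S] [MeasurableSpace S] [BorelSpace S]
    (g : S × ℝ → X) (hg : Measurable g) (hginj : Function.Injective g)
    (μ : Measure X) [IsFiniteMeasure μ]
    (μk : ℕ → Measure X) (hμkfin : ∀ k, IsFiniteMeasure (μk k))
    (hmono : ∀ k, μk k ≤ μk (k + 1))
    (hsup : ∀ A : Set X, MeasurableSet A → μ A = ⨆ k, μk k A)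
    (mk : ℕ → Measure S) (hmkfin : ∀ k, IsFiniteMeasure (mk k))
    (rk : ℕ → S × ℝ → ℝ≥0∞) (hrkmeas : ∀ k, Measurable (rk k))
    (hrep : ∀ k, μk k = Measure.map g (((mk k).prod volume).withDensity (rk k)))
    (hmarg : ∀ k, mk k = Measure.map Prod.fst (((mk k).prod volume).withDensity (rk k))) :
    ∃ (m : Measure S) (r : S × ℝ → ℝ≥0∞), IsFiniteMeasure m ∧ Measurable r ∧
      μ = Measure.map g ((m.prod volume).withDensity r) :=
  stmt10_general g hg hginj μ μk hsup mk rk hrep hmarg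
end

section
/- Let K ∈ ℝ, N ≥ 1, and s_K(t) = sin(√K t)/√K for K > 0, s_K(t) = t for K = 0, s_K(t) = sinh(√(−K) t)/√(−K) for K < 0. Let q : (−ℓ, ℓ) → (0, ∞) be a function satisfying, for all s ≤ t in (−ℓ, ℓ), (s_K(ℓ − t)/s_K(ℓ − s))^{N−1} ≤ q(t)/q(s) ≤ (s_K(t + ℓ)/s_K(s + ℓ))^{N−1}. Then q is locally Lipschitz continuous on (−ℓ, ℓ). -/
open scoped ENNReal NNReal

/-- The comparison function `s_K` of the measure contraction property. -/
noncomputable def sK (K t : ℝ) : ℝ :=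
  if 0 < K then Real.sin (Real.sqrt K * t) / Real.sqrt K
  else if K = 0 then t
  else Real.sinh (Real.sqrt (-K) * t) / Real.sqrt (-K)

/-!
Taking logarithms, the two-sided bound says that for `s ≤ t` the increment `log q t - log q s`
lies between the increments of `(N - 1) log s_K(ℓ - ·)` and `(N - 1) log s_K(· + ℓ)`. These are
smooth where `s_K(ℓ - t)` and `s_K(t + ℓ)` are positive, so `log q`, and with it `q`, is locally
Lipschitz. Positivity holds on all of `(-ℓ, ℓ)`: for `K > 0`, `N ≠ 1` and `2ℓ > π / √K`, the point
`t = π / √K - ℓ`, where `s_K(t + ℓ) = 0`, would lie in `(-ℓ, ℓ)` and the upper bound would force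
`q t ≤ 0`. For `N = 1` both bounds equal `1`, and constant comparison functions do the job.
-/

open Set Real Filter

section Lipschitz

variable {α β γ : Type*} [PseudoEMetricSpace α] [PseudoEMetricSpace β] [PseudoEMetricSpace γ]

lemma LocallyLipschitz.comp_locallyLipschitzOn {f : β → γ} {g : α → β} {s : Set α}
    (hf : LocallyLipschitz f) (hg : LocallyLipschitzOn s g) : LocallyLipschitzOn s (f ∘ g) := by
  intro x hx
  obtain ⟨Kg, t, ht, hgt⟩ := hg hx
  obtain ⟨Kf, u, hu, hfu⟩ := hf (g x)
  exact ⟨Kf * Kg, t ∩ g ⁻¹' u, inter_mem ht (hg.continuousOn x hx hu),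
    hfu.comp (hgt.mono inter_subset_left) ((mapsTo_preimage g u).mono_left inter_subset_right)⟩

lemma LocallyLipschitzOn.congr {f g : α → β} {s : Set α} (hf : LocallyLipschitzOn s f)
    (hfg : EqOn f g s) : LocallyLipschitzOn s g := by
  intro x hx
  obtain ⟨K, t, ht, hft⟩ := hf hx
  refine ⟨K, t ∩ s, inter_mem ht self_mem_nhdsWithin, fun y hy z hz => ?_⟩
  rw [← hfg hy.2, ← hfg hz.2]
  exact hft hy.1 hz.1

end Lipschitz

lemma lipschitzOnWith_of_sub_sandwich {s : Set ℝ} {u v w : ℝ → ℝ} {Kv Kw : ℝ≥0}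
    (hv : LipschitzOnWith Kv v s) (hw : LipschitzOnWith Kw w s)
    (h : ∀ x ∈ s, ∀ y ∈ s, x ≤ y → v y - v x ≤ u y - u x ∧ u y - u x ≤ w y - w x) :
    LipschitzOnWith (max Kv Kw) u s := by
  refine LipschitzOnWith.of_le_add_mul _ fun x hx y hy => ?_
  rcases le_total x y with hxy | hyx
  · have hvxy := hv.dist_le_mul y hy x hx
    rw [dist_comm y x, Real.dist_eq] at hvxy
    have : (Kv : ℝ) * dist x y ≤ max Kv Kw * dist x y := by gcongr; exact le_max_left _ _
    linarith [(h x hx y hy hxy).1, neg_abs_le (v y - v x)]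
  · have hwxy := hw.dist_le_mul x hx y hy
    rw [Real.dist_eq] at hwxy
    have : (Kw : ℝ) * dist x y ≤ max Kv Kw * dist x y := by gcongr; exact le_max_right _ _
    linarith [(h y hy x hx hyx).2, le_abs_self (w x - w y)]

lemma locallyLipschitzOn_of_sub_sandwich {s : Set ℝ} {u v w : ℝ → ℝ}
    (hv : LocallyLipschitzOn s v) (hw : LocallyLipschitzOn s w)
    (h : ∀ x ∈ s, ∀ y ∈ s, x ≤ y → v y - v x ≤ u y - u x ∧ u y - u x ≤ w y - w x) :
    LocallyLipschitzOn s u := by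
  intro x hx
  obtain ⟨Kv, tv, htv, hvt⟩ := hv hx
  obtain ⟨Kw, tw, htw, hwt⟩ := hw hx
  exact ⟨max Kv Kw, tv ∩ tw ∩ s, inter_mem (inter_mem htv htw) self_mem_nhdsWithin,
    lipschitzOnWith_of_sub_sandwich (hvt.mono fun y hy => hy.1.1)
      (hwt.mono fun y hy => hy.1.2) fun y hy z hz => h y hy.2 z hz.2⟩

lemma locallyLipschitzOn_of_rpow_div_sandwich {s : Set ℝ} (hs : Convex ℝ s) {f g q : ℝ → ℝ}
    (a : ℝ) (hf : ContDiffOn ℝ 1 f s) (hg : ContDiffOn ℝ 1 g s) (hf₀ : ∀ x ∈ s, 0 < f x)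
    (hg₀ : ∀ x ∈ s, 0 < g x) (hq₀ : ∀ x ∈ s, 0 < q x)
    (h : ∀ x ∈ s, ∀ y ∈ s, x ≤ y →
      (f y / f x) ^ a ≤ q y / q x ∧ q y / q x ≤ (g y / g x) ^ a) :
    LocallyLipschitzOn s q := by
  have log_rpow_div {p : ℝ → ℝ} (hp₀ : ∀ x ∈ s, 0 < p x) {x y : ℝ} (hx : x ∈ s) (hy : y ∈ s) :
      log ((p y / p x) ^ a) = a * log (p y) - a * log (p x) := by
    rw [log_rpow (div_pos (hp₀ y hy) (hp₀ x hx)),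
      log_div (hp₀ y hy).ne' (hp₀ x hx).ne']
    ring
  have hlogq : LocallyLipschitzOn s (log ∘ q) := by
    refine locallyLipschitzOn_of_sub_sandwich (v := fun x => a * log (f x))
      (w := fun x => a * log (g x))
      ((contDiffOn_const.mul (hf.log fun x hx => (hf₀ x hx).ne')).locallyLipschitzOn hs)
      ((contDiffOn_const.mul (hg.log fun x hx => (hg₀ x hx).ne')).locallyLipschitzOn hs)
      fun x hx y hy hxy => ?_
    have hq : log (q y / q x) = log (q y) - log (q x) :=
      log_div (hq₀ y hy).ne' (hq₀ x hx).ne'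
    simp only [Function.comp, ← hq, ← log_rpow_div hf₀ hx hy, ← log_rpow_div hg₀ hx hy]
    exact ⟨log_le_log (rpow_pos_of_pos (div_pos (hf₀ y hy) (hf₀ x hx)) a) (h x hx y hy hxy).1,
      log_le_log (div_pos (hq₀ y hy) (hq₀ x hx)) (h x hx y hy hxy).2⟩
  exact (contDiff_exp.locallyLipschitz.comp_locallyLipschitzOn hlogq).congr
    fun x hx => exp_log (hq₀ x hx)

lemma LocallyLipschitzOn.exists_lipschitzOnWith_Ioo_inter {f : ℝ → ℝ} {s : Set ℝ}
    (hf : LocallyLipschitzOn s f) {x : ℝ} (hx : x ∈ s) :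
    ∃ ε > 0, ∃ K, LipschitzOnWith K f (Ioo (x - ε) (x + ε) ∩ s) := by
  obtain ⟨K, t, ht, hft⟩ := hf hx
  obtain ⟨ε, hε, hball⟩ := Metric.mem_nhdsWithin_iff.1 ht
  exact ⟨ε, hε, K, hft.mono (by rwa [← Real.ball_eq_Ioo])⟩

lemma contDiff_sK (K : ℝ) {n : WithTop ℕ∞} : ContDiff ℝ n (sK K) := by
  unfold sK
  split_ifs
  · exact (contDiff_sin.comp (contDiff_const.mul contDiff_id)).div_const _
  · exact contDiff_id
  · exact (contDiff_sinh.comp (contDiff_const.mul contDiff_id)).div_const _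

lemma sK_pos {K x : ℝ} (hx : 0 < x) (hxK : 0 < K → x < π / √K) : 0 < sK K x := by
  unfold sK
  split_ifs with hK hK0
  · have hsqrt : 0 < √K := sqrt_pos.2 hK
    refine div_pos (sin_pos_of_pos_of_lt_pi (by positivity) ?_) hsqrt
    rw [← lt_div_iff₀' hsqrt]
    exact hxK hK
  · exact hx
  · have hsqrt : 0 < √(-K) := sqrt_pos.2 (neg_pos.2 ((not_lt.1 hK).lt_of_ne hK0))
    exact div_pos (sinh_pos_iff.2 (by positivity)) hsqrt

lemma sK_pi_div_sqrt {K : ℝ} (hK : 0 < K) : sK K (π / √K) = 0 := by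
  rw [sK, if_pos hK, mul_div_cancel₀ _ (sqrt_pos.2 hK).ne', sin_pi, zero_div]

lemma two_mul_le_pi_div_sqrt_of_le_sK_div_rpow {K N ℓ : ℝ} {q : ℝ → ℝ} (hN : N ≠ 1) (hK : 0 < K)
    (hq₀ : ∀ t ∈ Ioo (-ℓ) ℓ, 0 < q t)
    (hle : ∀ s ∈ Ioo (-ℓ) ℓ, ∀ t ∈ Ioo (-ℓ) ℓ, s ≤ t →
      q t / q s ≤ (sK K (t + ℓ) / sK K (s + ℓ)) ^ (N - 1)) :
    2 * ℓ ≤ π / √K := by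
  by_contra! hlt
  have hp : 0 < π / √K := div_pos pi_pos (sqrt_pos.2 hK)
  have hs : π / √K / 2 - ℓ ∈ Ioo (-ℓ) ℓ := ⟨by linarith, by linarith⟩
  have ht : π / √K - ℓ ∈ Ioo (-ℓ) ℓ := ⟨by linarith, by linarith⟩
  have h := hle _ hs _ ht (by linarith)
  rw [sub_add_cancel, sK_pi_div_sqrt hK, zero_div, zero_rpow (sub_ne_zero.2 hN)] at h
  exact h.not_gt (div_pos (hq₀ _ ht) (hq₀ _ hs))

theorem stmt12_general (K N ℓ : ℝ)
    (q : ℝ → ℝ) (hqpos : ∀ t ∈ Set.Ioo (-ℓ) ℓ, 0 < q t)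
    (hbound : ∀ s ∈ Set.Ioo (-ℓ) ℓ, ∀ t ∈ Set.Ioo (-ℓ) ℓ, s ≤ t →
      (sK K (ℓ - t) / sK K (ℓ - s)) ^ (N - 1) ≤ q t / q s ∧
      q t / q s ≤ (sK K (t + ℓ) / sK K (s + ℓ)) ^ (N - 1)) :
    ∀ t ∈ Set.Ioo (-ℓ) ℓ, ∃ ε > 0, ∃ C : ℝ≥0,
      LipschitzOnWith C q (Set.Ioo (t - ε) (t + ε) ∩ Set.Ioo (-ℓ) ℓ) := by
  suffices LocallyLipschitzOn (Ioo (-ℓ) ℓ) q from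
    fun t ht => this.exists_lipschitzOnWith_Ioo_inter ht
  rcases eq_or_ne N 1 with rfl | hN
  · refine locallyLipschitzOn_of_rpow_div_sandwich (convex_Ioo _ _) 0 (f := fun _ => 1)
      (g := fun _ => 1) contDiffOn_const contDiffOn_const (fun _ _ => one_pos) (fun _ _ => one_pos)
      hqpos fun s hs t ht hst => ?_
    simpa using hbound s hs t ht hst
  have hdiam (hK : 0 < K) : 2 * ℓ ≤ π / √K :=
    two_mul_le_pi_div_sqrt_of_le_sK_div_rpow hN hK hqpos fun s hs t ht hst =>
      (hbound s hs t ht hst).2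
  have hsK {x : ℝ} (hx : x ∈ Ioo 0 (2 * ℓ)) : 0 < sK K x :=
    sK_pos hx.1 fun hK => hx.2.trans_le (hdiam hK)
  exact locallyLipschitzOn_of_rpow_div_sandwich (convex_Ioo _ _) (N - 1)
    (f := fun t => sK K (ℓ - t)) (g := fun t => sK K (t + ℓ))
    ((contDiff_sK K).comp (contDiff_const.sub contDiff_id)).contDiffOn
    ((contDiff_sK K).comp (contDiff_id.add contDiff_const)).contDiffOn
    (fun t ht => hsK ⟨by linarith [ht.2], by linarith [ht.1]⟩)
    (fun t ht => hsK ⟨by linarith [ht.1], by linarith [ht.2]⟩) hqpos hbound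

/-- If `q : (-ℓ, ℓ) → (0, ∞)` satisfies the MCP(K,N) two-sided density estimate
`(s_K(ℓ-t)/s_K(ℓ-s))^{N-1} ≤ q(t)/q(s) ≤ (s_K(t+ℓ)/s_K(s+ℓ))^{N-1}` for all `s ≤ t`,
then `q` is locally Lipschitz on `(-ℓ, ℓ)`. -/
theorem stmt12 (K N ℓ : ℝ) (hN : 1 ≤ N) (hℓ : 0 < ℓ)
    (hKℓ : 0 < K → ℓ < Real.pi / Real.sqrt K)
    (q : ℝ → ℝ) (hqpos : ∀ t ∈ Set.Ioo (-ℓ) ℓ, 0 < q t)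
    (hbound : ∀ s ∈ Set.Ioo (-ℓ) ℓ, ∀ t ∈ Set.Ioo (-ℓ) ℓ, s ≤ t →
      (sK K (ℓ - t) / sK K (ℓ - s)) ^ (N - 1) ≤ q t / q s ∧
      q t / q s ≤ (sK K (t + ℓ) / sK K (s + ℓ)) ^ (N - 1)) :
    ∀ t ∈ Set.Ioo (-ℓ) ℓ, ∃ ε > 0, ∃ C : ℝ≥0,
      LipschitzOnWith C q (Set.Ioo (t - ε) (t + ε) ∩ Set.Ioo (-ℓ) ℓ) :=
  stmt12_general K N ℓ q hqpos hbound
end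

section
/- Let K ∈ ℝ, N ≥ 1, ℓ > 0 (with 2ℓ < π/√K if K > 0), and let q : (−ℓ, ℓ) → (0, ∞) satisfy ∫_{−ℓ}^{ℓ} q(t) dt = 1 and q(t) ≥ q(0) · s_K(ℓ − t)^{N−1}/s_K(ℓ)^{N−1} for t ∈ [0, ℓ), and q(t) ≥ q(0) · s_K(ℓ + t)^{N−1}/s_K(ℓ)^{N−1} for t ∈ (−ℓ, 0]. Then q(0) ≤ s_K(ℓ)^{N−1} / (2 ∫_0^{ℓ} s_K(τ)^{N−1} dτ). -/
/-!
Integrating the two lower bounds over `(-ℓ, ℓ)` bounds `1 = ∫ q` from below by `q(0)` times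
`∫_{-ℓ}^{ℓ} s_K(ℓ - |t|)^{N-1} dt / s_K(ℓ)^{N-1}`, and the substitution `τ = ℓ - |t|` turns that
integral into `2 ∫_0^ℓ s_K(τ)^{N-1} dτ`, which is positive because `s_K > 0` on `(0, ℓ]`.
-/

open MeasureTheory

lemma continuous_sK (K : ℝ) : Continuous (sK K) := by
  unfold sK
  split_ifs
  · exact (Real.continuous_sin.comp (continuous_const.mul continuous_id)).div_const _
  · exact continuous_id
  · exact (Real.continuous_sinh.comp (continuous_const.mul continuous_id)).div_const _

lemma sK_pos_s13 {K t : ℝ} (ht : 0 < t) (hK : 0 < K → t < Real.pi / Real.sqrt K) :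
    0 < sK K t := by
  unfold sK
  split_ifs with hpos hzero
  · have hsqrt : 0 < Real.sqrt K := Real.sqrt_pos.2 hpos
    have hlt : Real.sqrt K * t < Real.pi := by
      have := hK hpos
      rwa [lt_div_iff₀ hsqrt, mul_comm] at this
    exact div_pos (Real.sin_pos_of_pos_of_lt_pi (mul_pos hsqrt ht) hlt) hsqrt
  · exact ht
  · have hneg : 0 < -K := by
      push Not at hpos
      exact neg_pos.2 (lt_of_le_of_ne hpos hzero)
    have hsqrt : 0 < Real.sqrt (-K) := Real.sqrt_pos.2 hneg
    exact div_pos (Real.sinh_pos_iff.2 (mul_pos hsqrt ht)) hsqrt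

lemma intervalIntegral.integral_neg_self_of_even {g : ℝ → ℝ} (hg : ∀ t, g (-t) = g t) {a : ℝ}
    (hint : IntervalIntegrable g volume (-a) a) :
    ∫ t in -a..a, g t = 2 * ∫ t in (0 : ℝ)..a, g t := by
  have hzero : (0 : ℝ) ∈ Set.uIcc (-a) a := by
    rcases le_total 0 a with h | h
    · exact Set.mem_uIcc.2 (Or.inl ⟨by linarith, h⟩)
    · exact Set.mem_uIcc.2 (Or.inr ⟨h, by linarith⟩)
  have hleft : ∫ t in -a..0, g t = ∫ t in (0 : ℝ)..a, g t := by
    simpa only [hg, neg_zero] using (intervalIntegral.integral_comp_neg (a := 0) (b := a) g).symm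
  rw [← intervalIntegral.integral_add_adjacent_intervals (b := 0), hleft, two_mul]
  · exact hint.mono_set (Set.uIcc_subset_uIcc Set.left_mem_uIcc hzero)
  · exact hint.mono_set (Set.uIcc_subset_uIcc hzero Set.right_mem_uIcc)

lemma integral_Ioo_comp_sub_abs {f : ℝ → ℝ} (hf : Continuous f) {ℓ : ℝ} (hℓ : 0 ≤ ℓ) :
    ∫ t in Set.Ioo (-ℓ) ℓ, f (ℓ - |t|) = 2 * ∫ τ in (0 : ℝ)..ℓ, f τ := by
  have htent : Continuous fun t => f (ℓ - |t|) := hf.comp (continuous_const.sub continuous_abs)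
  have hhalf : ∫ t in (0 : ℝ)..ℓ, f (ℓ - |t|) = ∫ t in (0 : ℝ)..ℓ, f (ℓ - t) :=
    intervalIntegral.integral_congr fun t ht => by
      rw [Set.uIcc_of_le hℓ] at ht
      rw [abs_of_nonneg ht.1]
  rw [← integral_Ioc_eq_integral_Ioo, ← intervalIntegral.integral_of_le (by linarith),
    intervalIntegral.integral_neg_self_of_even (fun t => by rw [abs_neg])
      (htent.intervalIntegrable _ _),
    hhalf, intervalIntegral.integral_comp_sub_left (fun τ => f τ), sub_self, sub_zero]

/-- If `q` is a probability density on `(-ℓ, ℓ)` satisfying the MCP-type lower bounds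
`q(t) ≥ q(0) (s_K(ℓ-t)/s_K(ℓ))^{N-1}` on `[0, ℓ)` and
`q(t) ≥ q(0) (s_K(ℓ+t)/s_K(ℓ))^{N-1}` on `(-ℓ, 0]`, then
`q(0) ≤ s_K(ℓ)^{N-1} / (2 ∫₀^ℓ s_K(τ)^{N-1} dτ)`. -/
theorem stmt13 (K N ℓ : ℝ) (hN : 1 ≤ N) (hℓ : 0 < ℓ)
    (hKℓ : 0 < K → 2 * ℓ < Real.pi / Real.sqrt K)
    (q : ℝ → ℝ)
    (hnorm : ∫ t in Set.Ioo (-ℓ) ℓ, q t = 1)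
    (hright : ∀ t ∈ Set.Ico (0 : ℝ) ℓ,
      q 0 * (sK K (ℓ - t) ^ (N - 1) / sK K ℓ ^ (N - 1)) ≤ q t)
    (hleft : ∀ t ∈ Set.Ioc (-ℓ) (0 : ℝ),
      q 0 * (sK K (ℓ + t) ^ (N - 1) / sK K ℓ ^ (N - 1)) ≤ q t) :
    q 0 ≤ sK K ℓ ^ (N - 1) / (2 * ∫ τ in (0 : ℝ)..ℓ, sK K τ ^ (N - 1)) := by
  have hpos : ∀ t, 0 < t → t ≤ ℓ → 0 < sK K t := fun t ht htℓ =>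
    sK_pos_s13 ht fun hK => by linarith [hKℓ hK]
  have hpow : Continuous fun t => sK K t ^ (N - 1) :=
    (continuous_sK K).rpow_const fun _ => Or.inr (by linarith)
  have hS : 0 < sK K ℓ ^ (N - 1) := Real.rpow_pos_of_pos (hpos ℓ hℓ le_rfl) _
  have hI : 0 < ∫ τ in (0 : ℝ)..ℓ, sK K τ ^ (N - 1) :=
    intervalIntegral.intervalIntegral_pos_of_pos_on (hpow.intervalIntegrable _ _)
      (fun τ hτ => Real.rpow_pos_of_pos (hpos τ hτ.1 hτ.2.le) _) hℓ
  have htent : Continuous fun t => sK K (ℓ - |t|) ^ (N - 1) :=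
    hpow.comp (continuous_const.sub continuous_abs)
  have hq : IntegrableOn q (Set.Ioo (-ℓ) ℓ) := by
    by_contra h
    rw [integral_undef h] at hnorm
    exact zero_ne_one hnorm
  have hbound : ∀ t ∈ Set.Ioo (-ℓ) ℓ,
      q 0 / sK K ℓ ^ (N - 1) * sK K (ℓ - |t|) ^ (N - 1) ≤ q t := by
    intro t ⟨htl, htr⟩
    rw [div_mul_eq_mul_div, mul_div_assoc]
    rcases le_total 0 t with ht | ht
    · rw [abs_of_nonneg ht]
      exact hright t ⟨ht, htr⟩
    · rw [abs_of_nonpos ht, sub_neg_eq_add]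
      exact hleft t ⟨htl, ht⟩
  have hintegrated : q 0 / sK K ℓ ^ (N - 1) * (2 * ∫ τ in (0 : ℝ)..ℓ, sK K τ ^ (N - 1)) ≤ 1 :=
    calc q 0 / sK K ℓ ^ (N - 1) * (2 * ∫ τ in (0 : ℝ)..ℓ, sK K τ ^ (N - 1))
        = ∫ t in Set.Ioo (-ℓ) ℓ, q 0 / sK K ℓ ^ (N - 1) * sK K (ℓ - |t|) ^ (N - 1) := by
          rw [integral_const_mul, integral_Ioo_comp_sub_abs hpow hℓ.le]
      _ ≤ ∫ t in Set.Ioo (-ℓ) ℓ, q t :=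
          setIntegral_mono_on ((htent.integrableOn_Icc.mono_set Set.Ioo_subset_Icc_self).const_mul _)
            hq measurableSet_Ioo hbound
      _ = 1 := hnorm
  rw [le_div_iff₀ (by positivity)]
  rwa [div_mul_eq_mul_div, div_le_one hS] at hintegrated
end

section
/- Let X be Polish, R ⊆ X × X an equivalence relation on a Borel subset T of X whose quotient map f : T → T is μ-measurable for a Borel probability measure μ concentrated on T, with (T, B(T)) countably generated. Suppose μ = ∫_S μ_y dm(y) is the disintegration of μ over the quotient, with each μ_y a probability concentrated on the class R(y). If the map y ↦ μ_y is weakly continuous on a compact set K, then the set {(y, x) : y ∈ K, x ∈ R(y), μ_y({x}) > 0} is a countable union of Borel sets; in particular it is Borel. -/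
/-!
The atom mass `(y, x) ↦ μ_y {x}` is upper semicontinuous on `K × X`: by the portmanteau theorem
`ν ↦ ν F` is upper semicontinuous for closed `F`, and `ν {x}` is the infimum of `ν` over the
closed balls around `x`. Hence the sets `{(y, x) : y ∈ K, μ_y {x} ≥ 1 / n}` are closed, and the
atom set is the union over `n` of their intersections with the Borel graph of `R`.
-/

open MeasureTheory Filter Topology Set
open scoped ENNReal

lemma UpperSemicontinuousOn.isClosed_inter_preimage_Ici {α γ : Type*} [TopologicalSpace α]
    [LinearOrder γ] {f : α → γ} {s : Set α} (hf : UpperSemicontinuousOn f s) (hs : IsClosed s)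
    (y : γ) : IsClosed (s ∩ f ⁻¹' Ici y) := by
  obtain ⟨v, hv, hsv⟩ := upperSemicontinuousOn_iff_preimage_Ici.1 hf y
  exact hsv ▸ hs.inter hv

lemma ENNReal.pos_iff_exists_inv_natCast_le {a : ℝ≥0∞} : 0 < a ↔ ∃ n : ℕ, (n : ℝ≥0∞)⁻¹ ≤ a :=
  ⟨fun ha => (ENNReal.exists_inv_nat_lt ha.ne').imp fun _ => le_of_lt,
    fun ⟨n, hn⟩ => (ENNReal.inv_pos.2 (ENNReal.natCast_ne_top n)).trans_le hn⟩

namespace MeasureTheory.ProbabilityMeasure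

variable {X : Type*} [MeasurableSpace X] [TopologicalSpace X] [OpensMeasurableSpace X]

lemma upperSemicontinuous_apply_of_isClosed [HasOuterApproxClosed X] {F : Set X}
    (hF : IsClosed F) : UpperSemicontinuous fun ν : ProbabilityMeasure X => (ν : Measure X) F :=
  upperSemicontinuous_iff_limsup_le.2 fun _ => limsup_measure_closed_le_of_tendsto tendsto_id hF

lemma upperSemicontinuous_apply_singleton [TopologicalSpace.MetrizableSpace X] :
    UpperSemicontinuous fun p : ProbabilityMeasure X × X => (p.1 : Measure X) {p.2} := by
  let := TopologicalSpace.metrizableSpaceMetric X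
  rintro ⟨ν, x⟩ c hc
  have hballs : Tendsto (fun r => (ν : Measure X) (Metric.closedBall x r)) (𝓝[>] 0)
      (𝓝 ((ν : Measure X) {x})) := by
    refine ((tendsto_measure_cthickening_of_isClosed ⟨1, one_pos, measure_ne_top _ _⟩
      isClosed_singleton).mono_left nhdsWithin_le_nhds).congr' ?_
    filter_upwards [self_mem_nhdsWithin] with r hr using
      congrArg _ (Metric.cthickening_singleton x hr.le)
  obtain ⟨r, hνr, hr⟩ := ((hballs.eventually (gt_mem_nhds hc)).and self_mem_nhdsWithin).exists
  filter_upwards [((upperSemicontinuous_apply_of_isClosed Metric.isClosed_closedBall) ν c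
    hνr).prod_nhds (Metric.closedBall_mem_nhds x hr)] with p ⟨hp1, hp2⟩
  exact (measure_mono (singleton_subset_iff.2 hp2 : {p.2} ⊆ Metric.closedBall x r)).trans_lt hp1

lemma isClosed_setOf_le_apply_singleton [TopologicalSpace.MetrizableSpace X] {Y : Type*}
    [TopologicalSpace Y] {ν : Y → ProbabilityMeasure X} {K : Set Y} (hν : ContinuousOn ν K)
    (hK : IsClosed K) (ε : ℝ≥0∞) :
    IsClosed {p : Y × X | p.1 ∈ K ∧ ε ≤ (ν p.1 : Measure X) {p.2}} := by
  have hmass : UpperSemicontinuousOn (fun p : Y × X => (ν p.1 : Measure X) {p.2}) (K ×ˢ univ) :=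
    (upperSemicontinuous_apply_singleton.upperSemicontinuousOn univ).comp
      ((hν.comp continuousOn_fst fun _ hp => hp.1).prodMk continuousOn_snd) (mapsTo_univ _ _)
  convert hmass.isClosed_inter_preimage_Ici (hK.prod isClosed_univ) ε using 1
  ext p
  simp

end MeasureTheory.ProbabilityMeasure

theorem stmt14_general {X : Type*} [TopologicalSpace X] [PolishSpace X]
    [MeasurableSpace X] [BorelSpace X]
    (R : X → Set X) (hR : MeasurableSet {p : X × X | p.2 ∈ R p.1})
    (cond : X → ProbabilityMeasure X)
    (Kc : Set X) (hKc : IsCompact Kc)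
    (hcont : ContinuousOn cond Kc) :
    (∃ B : ℕ → Set (X × X), (∀ n, MeasurableSet (B n)) ∧
        {p : X × X | p.1 ∈ Kc ∧ p.2 ∈ R p.1 ∧ 0 < (cond p.1 : Measure X) {p.2}} =
          ⋃ n, B n) ∧
      MeasurableSet
        {p : X × X | p.1 ∈ Kc ∧ p.2 ∈ R p.1 ∧ 0 < (cond p.1 : Measure X) {p.2}} := by
  set atoms := {p : X × X | p.1 ∈ Kc ∧ p.2 ∈ R p.1 ∧ 0 < (cond p.1 : Measure X) {p.2}}
  set B : ℕ → Set (X × X) := fun n =>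
    {p | p.1 ∈ Kc ∧ (n : ℝ≥0∞)⁻¹ ≤ (cond p.1 : Measure X) {p.2}} ∩ {p | p.2 ∈ R p.1}
  have hB : ∀ n, MeasurableSet (B n) := fun n =>
    (ProbabilityMeasure.isClosed_setOf_le_apply_singleton hcont hKc.isClosed
      _).measurableSet.inter hR
  have hatoms : atoms = ⋃ n, B n := by
    ext p
    simp only [atoms, B, mem_ofPred_eq, mem_iUnion, mem_inter_iff,
      ENNReal.pos_iff_exists_inv_natCast_le]
    tauto
  exact ⟨⟨B, hB, hatoms⟩, hatoms ▸ MeasurableSet.iUnion hB⟩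

/-- Disintegration along an equivalence relation `R` on a Polish space: if the
conditional probabilities `y ↦ μ_y` (each concentrated on the class `R y`) are weakly
continuous on a compact set `K`, and the graph of `R` is Borel, then the set
`{(y, x) : y ∈ K, x ∈ R y, μ_y({x}) > 0}` of atoms is a countable union of Borel sets;
in particular it is Borel. -/
theorem stmt14 {X : Type*} [TopologicalSpace X] [PolishSpace X]
    [MeasurableSpace X] [BorelSpace X]
    (T : Set X) (hT : MeasurableSet T)
    (μ : Measure X) [IsProbabilityMeasure μ] (hμT : μ T = 1)
    (R : X → Set X) (hR : MeasurableSet {p : X × X | p.2 ∈ R p.1})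
    (m : Measure X) [IsProbabilityMeasure m]
    (cond : X → ProbabilityMeasure X)
    (hconc : ∀ᵐ y ∂m, (cond y : Measure X) (R y) = 1)
    (hdisint : ∀ A : Set X, MeasurableSet A →
      μ A = ∫⁻ y, (cond y : Measure X) A ∂m)
    (Kc : Set X) (hKc : IsCompact Kc)
    (hcont : ContinuousOn cond Kc) :
    (∃ B : ℕ → Set (X × X), (∀ n, MeasurableSet (B n)) ∧
        {p : X × X | p.1 ∈ Kc ∧ p.2 ∈ R p.1 ∧ 0 < (cond p.1 : Measure X) {p.2}} =
          ⋃ n, B n) ∧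
      MeasurableSet
        {p : X × X | p.1 ∈ Kc ∧ p.2 ∈ R p.1 ∧ 0 < (cond p.1 : Measure X) {p.2}} :=
  stmt14_general R hR cond Kc hKc hcont
end

section
/- Let (X, d_L) be a non-branching geodesic metric space, meaning geodesics with the same endpoints coincide and no geodesic admits two distinct extensions through an interior point. Suppose x ∈ X is such that there exist w ≠ x and z ≠ x with d_L(w, x) + d_L(x, z) = d_L(w, z) < ∞ (x is an interior point of a geodesic from w to z). Then any two geodesics through x realizing distances to points w', z' with d_L(w', x) + d_L(x, z') = d_L(w', z') and lying in the same cyclically-monotone relation must lie on a single geodesic: the union ⋃_{y : (x,y) ∈ G} γ_{[x,y]} ∪ ⋃_{z : (z,x) ∈ G} γ_{[z,x]} is contained in the image of a single geodesic, where G is a d_L-cyclically monotone set of aligned pairs. -/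
/-!
Cyclical monotonicity of `G` applied to two pairs `(a, x), (x, b) ∈ G` forces
`d(a, x) + d(x, b) = d(a, b)`. Hence every point of a segment `[x, y]` with `(x, y) ∈ G` lies
on a geodesic extending `[w, x]` beyond `x`, every point of a segment `[y, x]` with `(y, x) ∈ G`
on one extending `[z, x]` beyond `x`, and a point of the first kind and one of the second are
separated by `x`. Non-branching makes geodesic extensions unique, so two points on the same side
of `x` are at distance `|d(x, p) - d(x, q)|`, and the signed distance to `x` is an isometric
embedding of all these points into `ℝ`; its inverse is the required geodesic.
-/

open scoped ENNReal BigOperators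

def IsCyclicallyMonotone {X : Type*} (c : X → X → ℝ≥0∞) (Γ : Set (X × X)) : Prop :=
  ∀ (n : ℕ) (p : Fin (n + 1) → X × X), (∀ i, p i ∈ Γ) →
    ∑ i, c (p i).1 (p i).2 ≤ ∑ i, c (p (i + 1)).1 (p i).2

section Betweenness

variable {X : Type*} [PseudoEMetricSpace X]

def MetricBtw (a b c : X) : Prop :=
  edist a b + edist b c = edist a c

variable {w x y z : X}

theorem MetricBtw.symm (h : MetricBtw x y z) : MetricBtw z y x := by
  rw [MetricBtw, edist_comm z y, edist_comm y x, edist_comm z x, add_comm, h]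

theorem MetricBtw.trans_left_right (h₁ : MetricBtw w y z) (h₂ : MetricBtw w x y)
    (hwx : edist w x ≠ ⊤) : MetricBtw x y z := by
  refine le_antisymm ?_ (edist_triangle _ _ _)
  refine (ENNReal.add_le_add_iff_left hwx).1 ?_
  calc edist w x + (edist x y + edist y z) = edist w z := by rw [← add_assoc, h₂, h₁]
    _ ≤ edist w x + edist x z := edist_triangle _ _ _

theorem MetricBtw.trans_right_left (h₁ : MetricBtw w x z) (h₂ : MetricBtw x y z)
    (hyz : edist y z ≠ ⊤) : MetricBtw w x y :=
  (h₁.symm.trans_left_right h₂.symm (by rwa [edist_comm])).symm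

theorem MetricBtw.edist_right_eq_sub (h : MetricBtw x y z) (hxy : edist x y ≠ ⊤) :
    edist y z = edist x z - edist x y :=
  ENNReal.eq_sub_of_add_eq hxy (by rw [add_comm, h])

end Betweenness

section GeodesicSpace

variable (X : Type*) [PseudoEMetricSpace X]

def IsGeodesicSpace : Prop :=
  ∀ x y : X, edist x y < ⊤ → ∃ γ : ℝ → X, γ 0 = x ∧ γ 1 = y ∧
    ∀ s ∈ Set.Icc (0 : ℝ) 1, ∀ t ∈ Set.Icc (0 : ℝ) 1,
      edist (γ s) (γ t) = ENNReal.ofReal |s - t| * edist x y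

def IsNonBranching : Prop :=
  ∀ (x y : X) (r : ℝ≥0∞), r ≠ ⊤ → edist x y = r / 2 →
    ∃! z : X, edist x z = r ∧ edist y z = r / 2

variable {X}

theorem IsGeodesicSpace.exists_btw (hgeo : IsGeodesicSpace X) {u v : X}
    (huv : edist u v ≠ ⊤) {a : ℝ≥0∞} (ha : a ≤ edist u v) :
    ∃ m, edist u m = a ∧ MetricBtw u m v := by
  rcases eq_or_ne (edist u v) 0 with h0 | h0
  · have ha0 : a = 0 := le_antisymm (ha.trans h0.le) zero_le
    exact ⟨u, by simp [ha0], by simp [MetricBtw]⟩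
  set d := edist u v
  obtain ⟨γ, hγ0, hγ1, hγ⟩ := hgeo u v (lt_top_iff_ne_top.2 huv)
  have hs : ENNReal.ofReal (a / d).toReal = a / d :=
    ENNReal.ofReal_toReal (ENNReal.div_ne_top (ne_top_of_le_ne_top huv ha) h0)
  have hs1 : (a / d).toReal ≤ 1 :=
    ENNReal.toReal_le_of_le_ofReal zero_le_one
      (by simpa using ENNReal.div_le_of_le_mul (by simpa using ha))
  have hs_mem : (a / d).toReal ∈ Set.Icc (0 : ℝ) 1 := ⟨ENNReal.toReal_nonneg, hs1⟩
  have hum : edist u (γ (a / d).toReal) = a := by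
    rw [← hγ0, hγ 0 (by simp) _ hs_mem, zero_sub, abs_neg,
      abs_of_nonneg ENNReal.toReal_nonneg, hs, ENNReal.div_mul_cancel h0 huv]
  have hmv : edist (γ (a / d).toReal) v = d - a := by
    rw [← hγ1, hγ _ hs_mem 1 (by simp), abs_sub_comm, abs_of_nonneg (by linarith),
      ENNReal.ofReal_sub _ ENNReal.toReal_nonneg, ENNReal.ofReal_one, hs,
      ENNReal.sub_mul (fun _ _ => huv), one_mul, ENNReal.div_mul_cancel h0 huv]
  exact ⟨_, hum, by rw [MetricBtw, hum, hmv, add_tsub_cancel_of_le ha]⟩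

variable (hgeo : IsGeodesicSpace X) (hnb : IsNonBranching X)
include hgeo hnb

theorem IsNonBranching.eq_of_btw_of_edist_le {w x p q : X} (hwx : edist w x ≠ ⊤)
    (hp : MetricBtw w x p) (hq : MetricBtw w x q) (hpq : edist x p = edist x q)
    (hle : edist x p ≤ edist w x) : p = q := by
  set a := edist x p
  have ha : a ≠ ⊤ := ne_top_of_le_ne_top hwx hle
  obtain ⟨u, hxu, hxuw⟩ := hgeo.exists_btw (by rwa [edist_comm]) (hle.trans_eq (edist_comm _ _))
  have hwu : edist w u ≠ ⊤ := ne_top_of_le_ne_top hwx (le_self_add.trans_eq hxuw.symm)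
  have hux : edist u x = a * 2 / 2 := by
    rw [edist_comm, hxu, ENNReal.mul_div_cancel_right two_ne_zero ENNReal.ofNat_ne_top]
  -- `x` is the midpoint of `u` and any extension `r` of `[w, x]` by `a`.
  have hmid : ∀ r, MetricBtw w x r → edist x r = a → edist u r = a * 2 ∧ edist x r = a * 2 / 2 :=
    fun r hr hxr => ⟨by rw [← (hr.trans_left_right hxuw.symm hwu), edist_comm u, hxu, hxr,
      mul_two], by rw [hxr, ENNReal.mul_div_cancel_right two_ne_zero ENNReal.ofNat_ne_top]⟩
  exact (hnb u x (a * 2) (ENNReal.mul_ne_top ha ENNReal.ofNat_ne_top) hux).unique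
    (hmid p hp rfl) (hmid q hq hpq.symm)

theorem IsNonBranching.eq_of_btw_of_edist_eq {w x p q : X} (hwx0 : edist w x ≠ 0)
    (hwx : edist w x ≠ ⊤) (hp : MetricBtw w x p) (hq : MetricBtw w x q)
    (hpq : edist x p = edist x q) (hpfin : edist x p ≠ ⊤) : p = q := by
  obtain ⟨n, hn⟩ := ENNReal.exists_nat_mul_gt hwx0 hpfin
  induction n generalizing w x with
  | zero => simp at hn
  | succ n ih =>
    by_cases hle : edist x p ≤ edist w x
    · exact hnb.eq_of_btw_of_edist_le hgeo hwx hp hq hpq hle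
    push Not at hle
    -- Walk a step of length `d(w, x)` along both extensions; non-branching makes the new base
    -- points agree, and the remaining extensions are shorter by that length.
    obtain ⟨p₁, hxp₁, hp₁⟩ := hgeo.exists_btw hpfin hle.le
    obtain ⟨q₁, hxq₁, hq₁⟩ := hgeo.exists_btw (hpq ▸ hpfin) (hpq ▸ hle.le)
    have hp₁p := hp₁.edist_right_eq_sub (hxp₁ ▸ hwx)
    have hq₁q := hq₁.edist_right_eq_sub (hxq₁ ▸ hwx)
    have hp₁pfin : edist p₁ p ≠ ⊤ := hp₁p ▸ ENNReal.sub_ne_top hpfin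
    have hq₁qfin : edist q₁ q ≠ ⊤ := hq₁q ▸ ENNReal.sub_ne_top (hpq ▸ hpfin)
    obtain rfl : p₁ = q₁ := hnb.eq_of_btw_of_edist_le hgeo hwx
      (hp.trans_right_left hp₁ hp₁pfin) (hq.trans_right_left hq₁ hq₁qfin) (hxp₁.trans hxq₁.symm)
      hxp₁.le
    refine ih (by rwa [hxp₁]) (by rwa [hxp₁]) hp₁ hq₁
      (by rw [hp₁p, hq₁q, hpq]) hp₁pfin ?_
    rw [hxp₁]
    refine (ENNReal.add_lt_add_iff_left hwx).1 ?_
    calc edist w x + edist p₁ p = edist x p := by rw [← hxp₁, hp₁]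
      _ < (n + 1 : ℕ) * edist w x := hn
      _ = edist w x + n * edist w x := by push_cast; ring

theorem IsNonBranching.edist_eq_sub_of_btw {w x p q : X} (hwx0 : edist w x ≠ 0)
    (hwx : edist w x ≠ ⊤) (hp : MetricBtw w x p) (hq : MetricBtw w x q)
    (hle : edist x p ≤ edist x q) (hqfin : edist x q ≠ ⊤) :
    edist p q = edist x q - edist x p := by
  obtain ⟨q', hxq', hq'⟩ := hgeo.exists_btw hqfin hle
  have hq'q := hq'.edist_right_eq_sub (hxq' ▸ ne_top_of_le_ne_top hqfin hle)
  have hq'w : MetricBtw w x q' :=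
    hq.trans_right_left hq' (hq'q ▸ ENNReal.sub_ne_top hqfin)
  obtain rfl : p = q' := hnb.eq_of_btw_of_edist_eq hgeo hwx0 hwx hp hq'w hxq'.symm
    (ne_top_of_le_ne_top hqfin hle)
  rw [hq'q]

theorem IsNonBranching.edist_eq_ofReal_abs_sub_of_btw {w x p q : X} (hwx0 : edist w x ≠ 0)
    (hwx : edist w x ≠ ⊤) (hp : MetricBtw w x p) (hq : MetricBtw w x q)
    (hpfin : edist x p ≠ ⊤) (hqfin : edist x q ≠ ⊤) :
    edist p q = ENNReal.ofReal |(edist x p).toReal - (edist x q).toReal| := by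
  wlog hle : edist x p ≤ edist x q generalizing p q
  · rw [edist_comm, abs_sub_comm]
    exact this hq hp hqfin hpfin (le_of_not_ge hle)
  rw [hnb.edist_eq_sub_of_btw hgeo hwx0 hwx hp hq hle hqfin, abs_sub_comm,
    ← ENNReal.toReal_sub_of_le hle hqfin, abs_of_nonneg ENNReal.toReal_nonneg,
    ENNReal.ofReal_toReal (ENNReal.sub_ne_top hqfin)]

end GeodesicSpace

theorem exists_isometry_of_edist_eq_ofReal_abs_sub {X : Type*} [EMetricSpace X] [Nonempty X]
    {S : Set X} (f : X → ℝ) (hf : ∀ p ∈ S, ∀ q ∈ S, edist p q = ENNReal.ofReal |f p - f q|) :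
    ∃ (I : Set ℝ) (γ : ℝ → X),
      (∀ s ∈ I, ∀ t ∈ I, edist (γ s) (γ t) = ENNReal.ofReal |s - t|) ∧ S ⊆ γ '' I := by
  have hinj : Set.InjOn f S := fun p hp q hq h =>
    edist_eq_zero.1 (by rw [hf p hp q hq, h, sub_self, abs_zero, ENNReal.ofReal_zero])
  refine ⟨f '' S, Function.invFunOn f S, ?_, fun p hp =>
    ⟨f p, Set.mem_image_of_mem f hp, hinj.leftInvOn_invFunOn hp⟩⟩
  rintro _ ⟨p, hp, rfl⟩ _ ⟨q, hq, rfl⟩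
  rw [hinj.leftInvOn_invFunOn hp, hinj.leftInvOn_invFunOn hq]
  exact hf p hp q hq

theorem IsCyclicallyMonotone.add_le {X : Type*} {c : X → X → ℝ≥0∞} {Γ : Set (X × X)}
    (h : IsCyclicallyMonotone c Γ) {a b a' b' : X} (hab : (a, b) ∈ Γ) (hab' : (a', b') ∈ Γ) :
    c a b + c a' b' ≤ c a' b + c a b' := by
  have := h 1 ![(a, b), (a', b')] (by intro i; fin_cases i <;> assumption)
  simpa [Fin.sum_univ_two] using this

section Segments

variable {X : Type*} [PseudoEMetricSpace X] {G : Set (X × X)} {w x z p q : X}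

theorem IsCyclicallyMonotone.btw (hG : IsCyclicallyMonotone (fun x y => edist x y) G)
    {a b : X} (ha : (a, x) ∈ G) (hb : (x, b) ∈ G) : MetricBtw a x b :=
  le_antisymm (by simpa using hG.add_le ha hb) (edist_triangle _ _ _)

variable (G x) in
def segmentsFrom : Set X :=
  {p | ∃ y, (x, y) ∈ G ∧ MetricBtw x p y}

variable (G x) in
def segmentsTo : Set X :=
  {p | ∃ y, (y, x) ∈ G ∧ MetricBtw y p x}

variable (G x) in
open Classical in
noncomputable def segmentCoord (p : X) : ℝ :=
  if p ∈ segmentsFrom G x then (edist x p).toReal else -(edist x p).toReal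

variable (hGfin : ∀ p ∈ G, edist p.1 p.2 < ⊤)
include hGfin

theorem edist_ne_top_of_mem_segmentsFrom (hp : p ∈ segmentsFrom G x) : edist x p ≠ ⊤ := by
  obtain ⟨y, hy, hpy⟩ := hp
  exact ne_top_of_le_ne_top (hGfin _ hy).ne (le_self_add.trans_eq hpy)

theorem edist_ne_top_of_mem_segmentsTo (hp : p ∈ segmentsTo G x) : edist x p ≠ ⊤ := by
  obtain ⟨y, hy, hpy⟩ := hp
  rw [edist_comm]
  exact ne_top_of_le_ne_top (hGfin _ hy).ne (le_add_self.trans_eq hpy)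

variable (hG : IsCyclicallyMonotone (fun x y => edist x y) G)
include hG

theorem btw_of_mem_segmentsFrom (hwx : (w, x) ∈ G) (hp : p ∈ segmentsFrom G x) :
    MetricBtw w x p := by
  obtain ⟨y, hy, hpy⟩ := hp
  exact (hG.btw hwx hy).trans_right_left hpy
    (ne_top_of_le_ne_top (hGfin _ hy).ne (le_add_self.trans_eq hpy))

theorem btw_of_mem_segmentsTo (hxz : (x, z) ∈ G) (hp : p ∈ segmentsTo G x) :
    MetricBtw z x p := by
  obtain ⟨y, hy, hpy⟩ := hp
  exact (hG.btw hy hxz).symm.trans_right_left hpy.symm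
    (by rw [edist_comm]; exact ne_top_of_le_ne_top (hGfin _ hy).ne (le_self_add.trans_eq hpy))

theorem btw_of_mem_segmentsTo_of_mem_segmentsFrom (hq : q ∈ segmentsTo G x)
    (hp : p ∈ segmentsFrom G x) : MetricBtw q x p := by
  obtain ⟨y, hy, hqy⟩ := hq
  obtain ⟨y', hy', hpy'⟩ := hp
  have hyxp : MetricBtw y x p := (hG.btw hy hy').trans_right_left hpy'
    (ne_top_of_le_ne_top (hGfin _ hy').ne (le_add_self.trans_eq hpy'))
  exact hyxp.trans_left_right hqy (ne_top_of_le_ne_top (hGfin _ hy).ne (le_self_add.trans_eq hqy))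

theorem edist_eq_ofReal_abs_sub_segmentCoord (hgeo : IsGeodesicSpace X) (hnb : IsNonBranching X)
    (hwx : (w, x) ∈ G) (hxz : (x, z) ∈ G) (hw : edist w x ≠ 0) (hz : edist x z ≠ 0)
    (hp : p ∈ segmentsFrom G x ∪ segmentsTo G x) (hq : q ∈ segmentsFrom G x ∪ segmentsTo G x) :
    edist p q = ENNReal.ofReal |segmentCoord G x p - segmentCoord G x q| := by
  have hfin : ∀ {r}, r ∈ segmentsFrom G x ∪ segmentsTo G x → edist x r ≠ ⊤ := fun hr =>
    hr.elim (edist_ne_top_of_mem_segmentsFrom hGfin) (edist_ne_top_of_mem_segmentsTo hGfin)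
  have opposite : ∀ {p q}, p ∈ segmentsFrom G x → q ∈ segmentsFrom G x ∪ segmentsTo G x →
      q ∉ segmentsFrom G x →
      edist p q = ENNReal.ofReal |segmentCoord G x p - segmentCoord G x q| := by
    intro p q hp hq hqF
    have hqB := hq.resolve_left hqF
    rw [segmentCoord, segmentCoord, if_pos hp, if_neg hqF, sub_neg_eq_add,
      ← ENNReal.toReal_add (hfin (.inl hp)) (hfin hq), abs_of_nonneg ENNReal.toReal_nonneg,
      ENNReal.ofReal_toReal (ENNReal.add_ne_top.2 ⟨hfin (.inl hp), hfin hq⟩), edist_comm,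
      ← btw_of_mem_segmentsTo_of_mem_segmentsFrom hGfin hG hqB hp, edist_comm q, add_comm]
  by_cases hpF : p ∈ segmentsFrom G x <;> by_cases hqF : q ∈ segmentsFrom G x
  · rw [segmentCoord, segmentCoord, if_pos hpF, if_pos hqF]
    exact hnb.edist_eq_ofReal_abs_sub_of_btw hgeo hw (hGfin _ hwx).ne
      (btw_of_mem_segmentsFrom hGfin hG hwx hpF) (btw_of_mem_segmentsFrom hGfin hG hwx hqF)
      (hfin hp) (hfin hq)
  · exact opposite hpF hq hqF
  · rw [edist_comm, abs_sub_comm]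
    exact opposite hqF hp hpF
  · rw [segmentCoord, segmentCoord, if_neg hpF, if_neg hqF, neg_sub_neg, abs_sub_comm]
    exact hnb.edist_eq_ofReal_abs_sub_of_btw hgeo (by rwa [edist_comm])
      (by rw [edist_comm]; exact (hGfin _ hxz).ne)
      (btw_of_mem_segmentsTo hGfin hG hxz (hp.resolve_left hpF))
      (btw_of_mem_segmentsTo hGfin hG hxz (hq.resolve_left hqF)) (hfin hp) (hfin hq)

end Segments

/-- In a non-branching geodesic space, if `x` is an interior point of a transport ray of
a `d_L`-cyclically monotone set `G` of aligned pairs (i.e. `(w,x), (x,z) ∈ G` with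
`w ≠ x ≠ z`), then all the geodesics issued from or arriving at `x` used by `G` lie on
the image of a single geodesic: the set `R(x)` of points lying on a geodesic between `x`
and some `y` with `(x,y) ∈ G`, or between some `y` and `x` with `(y,x) ∈ G`, is
contained in the image of a single unit-speed geodesic. -/
theorem stmt18 {X : Type*} [EMetricSpace X]
    -- geodesic space: points at finite distance are joined by constant-speed geodesics
    (hgeo : ∀ x y : X, edist x y < ⊤ → ∃ γ : ℝ → X, γ 0 = x ∧ γ 1 = y ∧
      ∀ s ∈ Set.Icc (0 : ℝ) 1, ∀ t ∈ Set.Icc (0 : ℝ) 1,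
        edist (γ s) (γ t) = ENNReal.ofReal |s - t| * edist x y)
    -- non-branching, in the metric form: for `d_L(x,y) = r/2` the set
    -- `{z : d_L(x,z) = r} ∩ {z : d_L(y,z) = r/2}` is a singleton
    (hnb : ∀ (x y : X) (r : ℝ≥0∞), r ≠ ⊤ → edist x y = r / 2 →
      ∃! z : X, edist x z = r ∧ edist y z = r / 2)
    (G : Set (X × X)) (hG : IsCyclicallyMonotone (fun x y => edist x y) G)
    (hGfin : ∀ p ∈ G, edist p.1 p.2 < ⊤)
    (x w z : X) (hwx : (w, x) ∈ G) (hxz : (x, z) ∈ G) (hw : w ≠ x) (hz : x ≠ z) :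
    ∃ (I : Set ℝ) (γ : ℝ → X),
      (∀ s ∈ I, ∀ t ∈ I, edist (γ s) (γ t) = ENNReal.ofReal |s - t|) ∧
      {p : X | (∃ y, (x, y) ∈ G ∧ edist x p + edist p y = edist x y) ∨
               (∃ y, (y, x) ∈ G ∧ edist y p + edist p x = edist y x)} ⊆ γ '' I := by
  have : Nonempty X := ⟨x⟩
  exact exists_isometry_of_edist_eq_ofReal_abs_sub (S := segmentsFrom G x ∪ segmentsTo G x)
    (segmentCoord G x) fun p hp q hq => edist_eq_ofReal_abs_sub_segmentCoord hGfin hG hgeo hnb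
      hwx hxz (edist_pos.2 hw).ne' (edist_pos.2 hz).ne' hp hq
end
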